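/- arXiv:2009.14815 — 5 statements merged into one kernel-verified Lean document; each statement's English description precedes it below -/
import Mathlib

section
/- With M_i = [m_i/2]_q = (q^{m_i/2} - q^{-m_i/2})/(q - q^{-1}), the polynomial ξ_4 = (M_1² - M_4²)(M_3² - M_2²) is invariant under the transformation s_3: m_i ↦ m_i + α_3 (i=1,2,3), m_4 ↦ m_4 - α_3 with α_3 = (m_4 - m_1 - m_2 - m_3)/2. -/
noncomputable def Mnum {K : Type*} [Field K] (q r : K) (n : ℤ) : K :=
  (r ^ n - r ^ (-n)) / (q - q⁻¹)

noncomputable def xi4 {K : Type*} [Field K] (q r : K) (n1 n2 n3 n4 : ℤ) : K :=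
  ((Mnum q r n1) ^ 2 - (Mnum q r n4) ^ 2) * ((Mnum q r n3) ^ 2 - (Mnum q r n2) ^ 2)

lemma key {K : Type*} [Field K] (q r : K) (hr0 : r ≠ 0) (a b : ℤ) :
    Mnum q r a ^ 2 - Mnum q r b ^ 2 =
      (r ^ (a+b) - r ^ (-(a+b))) * (r ^ (a-b) - r ^ (-(a-b))) / (q - q⁻¹) ^ 2 := by
  unfold Mnum
  rw [div_pow, div_pow, div_sub_div_same]
  congr 1
  have ha : r ^ a * r ^ (-a) = 1 := by rw [← zpow_add₀ hr0]; simp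
  have hb : r ^ b * r ^ (-b) = 1 := by rw [← zpow_add₀ hr0]; simp
  have h1 : r ^ (a+b) = r ^ a * r ^ b := zpow_add₀ hr0 a b
  have h2 : r ^ (-(a+b)) = r ^ (-a) * r ^ (-b) := by rw [neg_add]; exact zpow_add₀ hr0 _ _
  have h3 : r ^ (a-b) = r ^ a * r ^ (-b) := by rw [sub_eq_add_neg]; exact zpow_add₀ hr0 _ _
  have h4 : r ^ (-(a-b)) = r ^ (-a) * r ^ b := by rw [neg_sub, sub_eq_add_neg, add_comm]; exact zpow_add₀ hr0 _ _
  rw [h1, h2, h3, h4]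
  linear_combination ((r ^ b) ^ 2 + (r ^ (-b)) ^ 2 - 2) * ha + (2 - (r ^ a) ^ 2 - (r ^ (-a)) ^ 2) * hb

/-- `ξ₄` is invariant under `s₃ : m_i ↦ m_i + α₃ (i=1,2,3), m₄ ↦ m₄ - α₃`
with `α₃ = (m₄-m₁-m₂-m₃)/2`.  In `r`-units the arguments `2m_i` are shifted by
`d = m₄-m₁-m₂-m₃ = 2α₃` (resp. `-d`). -/
theorem xi4_invariant_s3 {K : Type*} [Field K] (q s r : K)
    (hs : s ^ 2 = q) (hr : r ^ 2 = s) (hq : q ≠ 0) (hq2 : q - q⁻¹ ≠ 0)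
    (m1 m2 m3 m4 : ℤ) :
    xi4 q r (2*m1 + (m4 - m1 - m2 - m3)) (2*m2 + (m4 - m1 - m2 - m3))
        (2*m3 + (m4 - m1 - m2 - m3)) (2*m4 - (m4 - m1 - m2 - m3)) =
    xi4 q r (2*m1) (2*m2) (2*m3) (2*m4) := by
  have hr0 : r ≠ 0 := by
    intro h; apply hq; rw [← hs, ← hr, h]; ring
  unfold xi4
  rw [key q r hr0, key q r hr0, key q r hr0, key q r hr0]
  have e1 : (2*m1 + (m4 - m1 - m2 - m3)) + (2*m4 - (m4 - m1 - m2 - m3)) = 2*m1 + 2*m4 := by ring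
  have e2 : (2*m1 + (m4 - m1 - m2 - m3)) - (2*m4 - (m4 - m1 - m2 - m3)) = -(2*m2 + 2*m3) := by ring
  have e3 : (2*m3 + (m4 - m1 - m2 - m3)) + (2*m2 + (m4 - m1 - m2 - m3)) = -(2*m1 - 2*m4) := by ring
  have e4 : (2*m3 + (m4 - m1 - m2 - m3)) - (2*m2 + (m4 - m1 - m2 - m3)) = 2*m3 - 2*m2 := by ring
  rw [e1, e2, e3, e4, neg_neg, neg_neg]
  ring
end

section
/- In an associative unital algebra over a commutative ring containing q and q^{-1} with q² ≠ q^{-2}, suppose elements C12, C23, C13 and central elements C1, C2, C3, C123 satisfy the three Askey–Wilson relations: C12 + [C23,C13]_q/(q²-q^{-2}) = (C1C2 + C3C123)/(q+q^{-1}), and cyclic permutations (12→23→13→12, 1→2→3→1). Then the element Ω = q C12 C23 C13 + q² C12² + q^{-2} C23² + q² C13² - q C12(C1C2 + C3C123) - q^{-1} C23(C2C3 + C1C123) - q C13(C3C1 + C2C123) commutes with C12. -/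
/-- In an algebra satisfying the `aw(3)` relations with `C1, C2, C3, C123`
central, the Casimir element `Ω` commutes with `C12`. -/
theorem aw3_casimir_commutes_C12 {K A : Type*} [Field K] [Ring A] [Algebra K A]
    (q : K) (hq : q ≠ 0) (hq1 : q + q⁻¹ ≠ 0) (hq2 : q ^ 2 - q⁻¹ ^ 2 ≠ 0)
    (C12 C23 C13 C1 C2 C3 C123 : A)
    (hC1 : ∀ x : A, Commute C1 x) (hC2 : ∀ x : A, Commute C2 x)
    (hC3 : ∀ x : A, Commute C3 x) (hC123 : ∀ x : A, Commute C123 x)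
    (r1 : C12 + (q ^ 2 - q⁻¹ ^ 2)⁻¹ • (q • (C23 * C13) - q⁻¹ • (C13 * C23)) =
      (q + q⁻¹)⁻¹ • (C1 * C2 + C3 * C123))
    (r2 : C23 + (q ^ 2 - q⁻¹ ^ 2)⁻¹ • (q • (C13 * C12) - q⁻¹ • (C12 * C13)) =
      (q + q⁻¹)⁻¹ • (C2 * C3 + C1 * C123))
    (r3 : C13 + (q ^ 2 - q⁻¹ ^ 2)⁻¹ • (q • (C12 * C23) - q⁻¹ • (C23 * C12)) =
      (q + q⁻¹)⁻¹ • (C3 * C1 + C2 * C123)) :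
    Commute
      (q • (C12 * C23 * C13) + (q ^ 2) • C12 ^ 2 + (q⁻¹ ^ 2) • C23 ^ 2
        + (q ^ 2) • C13 ^ 2
        - q • (C12 * (C1 * C2 + C3 * C123))
        - q⁻¹ • (C23 * (C2 * C3 + C1 * C123))
        - q • (C13 * (C3 * C1 + C2 * C123)))
      C12 := by
  -- abbreviations for readability
  have hfac : q ^ 2 - q⁻¹ ^ 2 = (q - q⁻¹) * (q + q⁻¹) := by
    field_simp
    ring
  have hsc : (q ^ 2 - q⁻¹ ^ 2) * (q + q⁻¹)⁻¹ = q - q⁻¹ := by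
    rw [hfac, mul_assoc, mul_inv_cancel₀ hq1, mul_one]
  -- Rescaled relation 2
  have hE2 : q • (C13 * C12) - q⁻¹ • (C12 * C13) + (q ^ 2 - q⁻¹ ^ 2) • C23
      - (q - q⁻¹) • (C2 * C3 + C1 * C123) = 0 := by
    have h' := congrArg (fun z : A => (q ^ 2 - q⁻¹ ^ 2) • z) r2
    simp only [smul_add, smul_smul] at h'
    rw [mul_inv_cancel₀ hq2, one_smul, hsc] at h'
    rw [sub_eq_zero, smul_add, ← h']
    abel
  -- Rescaled relation 3
  have hE3 : q • (C12 * C23) - q⁻¹ • (C23 * C12) + (q ^ 2 - q⁻¹ ^ 2) • C13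
      - (q - q⁻¹) • (C3 * C1 + C2 * C123) = 0 := by
    have h' := congrArg (fun z : A => (q ^ 2 - q⁻¹ ^ 2) • z) r3
    simp only [smul_add, smul_smul] at h'
    rw [mul_inv_cancel₀ hq2, one_smul, hsc] at h'
    rw [sub_eq_zero, smul_add, ← h']
    abel
  -- central-movement lemmas
  have m1 : ∀ x y : A, x * (C1 * y) = C1 * (x * y) := fun x y => by
    rw [← mul_assoc, ← (hC1 x).eq, mul_assoc]
  have m1' : ∀ x : A, x * C1 = C1 * x := fun x => ((hC1 x).eq).symm
  have m2 : ∀ x y : A, x * (C2 * y) = C2 * (x * y) := fun x y => by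
    rw [← mul_assoc, ← (hC2 x).eq, mul_assoc]
  have m2' : ∀ x : A, x * C2 = C2 * x := fun x => ((hC2 x).eq).symm
  have m3 : ∀ x y : A, x * (C3 * y) = C3 * (x * y) := fun x y => by
    rw [← mul_assoc, ← (hC3 x).eq, mul_assoc]
  have m3' : ∀ x : A, x * C3 = C3 * x := fun x => ((hC3 x).eq).symm
  have m4 : ∀ x y : A, x * (C123 * y) = C123 * (x * y) := fun x y => by
    rw [← mul_assoc, ← (hC123 x).eq, mul_assoc]
  have m4' : ∀ x : A, x * C123 = C123 * x := fun x => ((hC123 x).eq).symm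
  -- the key identity: Ω * C12 - C12 * Ω is an explicit combination of the
  -- (zero) relation elements E2 and E3.
  have key :
      (q • (C12 * C23 * C13) + (q ^ 2) • C12 ^ 2 + (q⁻¹ ^ 2) • C23 ^ 2
        + (q ^ 2) • C13 ^ 2
        - q • (C12 * (C1 * C2 + C3 * C123))
        - q⁻¹ • (C23 * (C2 * C3 + C1 * C123))
        - q • (C13 * (C3 * C1 + C2 * C123))) * C12
      - C12 * (q • (C12 * C23 * C13) + (q ^ 2) • C12 ^ 2 + (q⁻¹ ^ 2) • C23 ^ 2
        + (q ^ 2) • C13 ^ 2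
        - q • (C12 * (C1 * C2 + C3 * C123))
        - q⁻¹ • (C23 * (C2 * C3 + C1 * C123))
        - q • (C13 * (C3 * C1 + C2 * C123)))
      =
      -((C3 * C1 + C2 * C123) * (q • (C13 * C12) - q⁻¹ • (C12 * C13)
          + (q ^ 2 - q⁻¹ ^ 2) • C23 - (q - q⁻¹) • (C2 * C3 + C1 * C123)))
      + q⁻¹ • ((q • (C13 * C12) - q⁻¹ • (C12 * C13)
          + (q ^ 2 - q⁻¹ ^ 2) • C23 - (q - q⁻¹) • (C2 * C3 + C1 * C123)) * C13)
      + q • (C13 * (q • (C13 * C12) - q⁻¹ • (C12 * C13)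
          + (q ^ 2 - q⁻¹ ^ 2) • C23 - (q - q⁻¹) • (C2 * C3 + C1 * C123)))
      + C12 * (C23 * (q • (C13 * C12) - q⁻¹ • (C12 * C13)
          + (q ^ 2 - q⁻¹ ^ 2) • C23 - (q - q⁻¹) • (C2 * C3 + C1 * C123)))
      + (C2 * C3 + C1 * C123) * (q • (C12 * C23) - q⁻¹ • (C23 * C12)
          + (q ^ 2 - q⁻¹ ^ 2) • C13 - (q - q⁻¹) • (C3 * C1 + C2 * C123))
      - q • ((q • (C12 * C23) - q⁻¹ • (C23 * C12)
          + (q ^ 2 - q⁻¹ ^ 2) • C13 - (q - q⁻¹) • (C3 * C1 + C2 * C123)) * C23)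
      - C12 * ((q • (C12 * C23) - q⁻¹ • (C23 * C12)
          + (q ^ 2 - q⁻¹ ^ 2) • C13 - (q - q⁻¹) • (C3 * C1 + C2 * C123)) * C13)
      - q⁻¹ • (C23 * (q • (C12 * C23) - q⁻¹ • (C23 * C12)
          + (q ^ 2 - q⁻¹ ^ 2) • C13 - (q - q⁻¹) • (C3 * C1 + C2 * C123))) := by
    simp only [pow_two, mul_add, add_mul, mul_sub, sub_mul, smul_add, smul_sub,
      smul_smul, smul_mul_assoc, mul_smul_comm, neg_mul, mul_neg, neg_smul,
      mul_assoc]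
    simp only [m1, m1']
    simp only [m2, m2']
    simp only [m3, m3']
    simp only [m4, m4']
    match_scalars <;> field_simp <;> ring
  have main :
      (q • (C12 * C23 * C13) + (q ^ 2) • C12 ^ 2 + (q⁻¹ ^ 2) • C23 ^ 2
        + (q ^ 2) • C13 ^ 2
        - q • (C12 * (C1 * C2 + C3 * C123))
        - q⁻¹ • (C23 * (C2 * C3 + C1 * C123))
        - q • (C13 * (C3 * C1 + C2 * C123))) * C12
      = C12 * (q • (C12 * C23 * C13) + (q ^ 2) • C12 ^ 2 + (q⁻¹ ^ 2) • C23 ^ 2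
        + (q ^ 2) • C13 ^ 2
        - q • (C12 * (C1 * C2 + C3 * C123))
        - q⁻¹ • (C23 * (C2 * C3 + C1 * C123))
        - q • (C13 * (C3 * C1 + C2 * C123))) := by
    rw [← sub_eq_zero, key, hE2, hE3]
    simp
  exact main
end

section
/- In an associative unital algebra over a field containing an invertible q with q² ≠ q^{-2}, suppose C12, C23, C13 and central C1, C2, C3, C123 satisfy the aw(3) relations. Then the element Ω (as defined in the previous statement) also commutes with C23 and with C13. -/
/-!
Write `a = C1 C2 + C3 C123`, `b = C2 C3 + C1 C123`, `c = C3 C1 + C2 C123` for the central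
right-hand sides. The aw(3) relations are invariant under the cyclic rotation
`(C12, C23, C13; a, b, c) ↦ (C23, C13, C12; b, c, a)`, and modulo these relations so is `Ω`.
Hence it suffices to show that `Ω` commutes with the middle generator `C23`: the same statement
for the rotated triple is commutation with `C13`. The middle case is a normal-ordering
computation: every product is rewritten in the order `C12 < C23 < C13` using the relations,
and central elements are moved to the left.
-/

theorem mul_mul_eq_of_mul_eq {M : Type*} [Semigroup M] {x y e : M} (h : x * y = e) (w : M) :
    x * (y * w) = e * w := by
  rw [← mul_assoc, h]

namespace AskeyWilson

variable {K A : Type*} [Field K] [Ring A] [Algebra K A]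

section Relation

variable {q : K} {X Y Z a : A}

theorem mul_swap_of_rel (hq2 : q ^ 2 - q⁻¹ ^ 2 ≠ 0)
    (r : X + (q ^ 2 - q⁻¹ ^ 2)⁻¹ • (q • (Y * Z) - q⁻¹ • (Z * Y)) = (q + q⁻¹)⁻¹ • a) :
    Z * Y = (q ^ 2) • (Y * Z) + (q * (q ^ 2 - q⁻¹ ^ 2)) • X - (q ^ 2 - 1) • a := by
  have hq : q ≠ 0 := by rintro rfl; simp at hq2
  have hq4 : q ^ 4 - 1 ≠ 0 := fun h => hq2 (by field_simp; linear_combination h)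
  have hq2' : q ^ 2 + 1 ≠ 0 := fun h => hq4 (by linear_combination (q ^ 2 - 1) * h)
  calc Z * Y = (-q * (q ^ 2 - q⁻¹ ^ 2)) •
          (X + (q ^ 2 - q⁻¹ ^ 2)⁻¹ • (q • (Y * Z) - q⁻¹ • (Z * Y)) - (q + q⁻¹)⁻¹ • a)
        + ((q ^ 2) • (Y * Z) + (q * (q ^ 2 - q⁻¹ ^ 2)) • X - (q ^ 2 - 1) • a) := by
          match_scalars <;> field_simp <;> ring
    _ = _ := by rw [r, sub_self, smul_zero, zero_add]

theorem mul_swap_of_rel' (hq2 : q ^ 2 - q⁻¹ ^ 2 ≠ 0)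
    (r : X + (q ^ 2 - q⁻¹ ^ 2)⁻¹ • (q • (Y * Z) - q⁻¹ • (Z * Y)) = (q + q⁻¹)⁻¹ • a) :
    Y * Z = (q⁻¹ ^ 2) • (Z * Y) - (q⁻¹ * (q ^ 2 - q⁻¹ ^ 2)) • X + (1 - q⁻¹ ^ 2) • a := by
  have hq : q ≠ 0 := by rintro rfl; simp at hq2
  rw [mul_swap_of_rel hq2 r]
  match_scalars <;> field_simp <;> ring

end Relation

structure IsAW3 (q : K) (X Y Z a b c : A) : Prop where
  rel_X : X + (q ^ 2 - q⁻¹ ^ 2)⁻¹ • (q • (Y * Z) - q⁻¹ • (Z * Y)) = (q + q⁻¹)⁻¹ • a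
  rel_Y : Y + (q ^ 2 - q⁻¹ ^ 2)⁻¹ • (q • (Z * X) - q⁻¹ • (X * Z)) = (q + q⁻¹)⁻¹ • b
  rel_Z : Z + (q ^ 2 - q⁻¹ ^ 2)⁻¹ • (q • (X * Y) - q⁻¹ • (Y * X)) = (q + q⁻¹)⁻¹ • c

def casimir (q : K) (X Y Z a b c : A) : A :=
  q • (X * Y * Z) + (q ^ 2) • X ^ 2 + (q⁻¹ ^ 2) • Y ^ 2 + (q ^ 2) • Z ^ 2
    - q • (X * a) - q⁻¹ • (Y * b) - q • (Z * c)

namespace IsAW3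

variable {q : K} {X Y Z a b c : A}

theorem rotate (h : IsAW3 q X Y Z a b c) : IsAW3 q Y Z X b c a :=
  ⟨h.rel_Y, h.rel_Z, h.rel_X⟩

theorem casimir_rotate (hq2 : q ^ 2 - q⁻¹ ^ 2 ≠ 0) (h : IsAW3 q X Y Z a b c)
    (hc : Commute Z c) : casimir q Y Z X b c a = casimir q X Y Z a b c := by
  have hq : q ≠ 0 := by rintro rfl; simp at hq2
  have hYX := mul_swap_of_rel hq2 h.rel_Z
  have hZX := mul_swap_of_rel' hq2 h.rel_Y
  simp only [casimir, pow_two, mul_assoc, mul_add, add_mul, mul_sub, sub_mul, smul_mul_assoc,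
    mul_smul_comm, smul_smul, smul_add, smul_sub, mul_mul_eq_of_mul_eq hYX, hZX, hc.eq]
  match_scalars <;> field_simp <;> ring

theorem commute_casimir_middle (hq2 : q ^ 2 - q⁻¹ ^ 2 ≠ 0) (h : IsAW3 q X Y Z a b c)
    (ha : ∀ w, Commute a w) (hb : ∀ w, Commute b w) (hc : ∀ w, Commute c w) :
    Commute (casimir q X Y Z a b c) Y := by
  have hq : q ≠ 0 := by rintro rfl; simp at hq2
  have hZY := mul_swap_of_rel hq2 h.rel_X
  have hYX := mul_swap_of_rel hq2 h.rel_Z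
  have hZX := mul_swap_of_rel' hq2 h.rel_Y
  simp only [Commute, SemiconjBy, casimir, pow_two, mul_assoc, mul_add, add_mul, mul_sub,
    sub_mul, smul_mul_assoc, mul_smul_comm, smul_smul, smul_add, smul_sub,
    hZY, mul_mul_eq_of_mul_eq hZY, hYX, mul_mul_eq_of_mul_eq hYX, hZX,
    ← (ha X).left_comm, ← (ha Y).left_comm, ← (hb Y).left_comm, ← (hc Y).left_comm,
    ← (ha X).eq, ← (ha Y).eq, ← (ha Z).eq, ← (hb Y).eq, ← (hc X).eq, ← (hc Z).eq, ← (ha c).eq]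
  match_scalars <;> field_simp <;> ring

end IsAW3

end AskeyWilson

open AskeyWilson in
theorem aw3_casimir_commutes_C23_C13_general {K A : Type*} [Field K] [Ring A] [Algebra K A]
    (q : K) (hq2 : q ^ 2 - q⁻¹ ^ 2 ≠ 0)
    (C12 C23 C13 C1 C2 C3 C123 : A)
    (hC1 : ∀ x : A, Commute C1 x) (hC2 : ∀ x : A, Commute C2 x)
    (hC3 : ∀ x : A, Commute C3 x) (hC123 : ∀ x : A, Commute C123 x)
    (r1 : C12 + (q ^ 2 - q⁻¹ ^ 2)⁻¹ • (q • (C23 * C13) - q⁻¹ • (C13 * C23)) =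
      (q + q⁻¹)⁻¹ • (C1 * C2 + C3 * C123))
    (r2 : C23 + (q ^ 2 - q⁻¹ ^ 2)⁻¹ • (q • (C13 * C12) - q⁻¹ • (C12 * C13)) =
      (q + q⁻¹)⁻¹ • (C2 * C3 + C1 * C123))
    (r3 : C13 + (q ^ 2 - q⁻¹ ^ 2)⁻¹ • (q • (C12 * C23) - q⁻¹ • (C23 * C12)) =
      (q + q⁻¹)⁻¹ • (C3 * C1 + C2 * C123)) :
    Commute
      (q • (C12 * C23 * C13) + (q ^ 2) • C12 ^ 2 + (q⁻¹ ^ 2) • C23 ^ 2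
        + (q ^ 2) • C13 ^ 2
        - q • (C12 * (C1 * C2 + C3 * C123))
        - q⁻¹ • (C23 * (C2 * C3 + C1 * C123))
        - q • (C13 * (C3 * C1 + C2 * C123)))
      C23 ∧
    Commute
      (q • (C12 * C23 * C13) + (q ^ 2) • C12 ^ 2 + (q⁻¹ ^ 2) • C23 ^ 2
        + (q ^ 2) • C13 ^ 2
        - q • (C12 * (C1 * C2 + C3 * C123))
        - q⁻¹ • (C23 * (C2 * C3 + C1 * C123))
        - q • (C13 * (C3 * C1 + C2 * C123)))
      C13 := by
  have central {x y z t : A} (hx : ∀ w, Commute x w) (hy : ∀ w, Commute y w)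
      (hz : ∀ w, Commute z w) (ht : ∀ w, Commute t w) (w : A) : Commute (x * y + z * t) w :=
    ((hx w).mul_left (hy w)).add_left ((hz w).mul_left (ht w))
  have ha := central hC1 hC2 hC3 hC123
  have hb := central hC2 hC3 hC1 hC123
  have hc := central hC3 hC1 hC2 hC123
  have h : IsAW3 q C12 C23 C13 _ _ _ := ⟨r1, r2, r3⟩
  refine ⟨h.commute_casimir_middle hq2 ha hb hc, ?_⟩
  change Commute (casimir q C12 C23 C13 _ _ _) C13
  rw [← h.casimir_rotate hq2 (hc C13).symm]
  exact h.rotate.commute_casimir_middle hq2 hb hc ha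

/-- In an algebra satisfying the `aw(3)` relations with `C1, C2, C3, C123`
central, the Casimir element `Ω` also commutes with `C23` and with `C13`. -/
theorem aw3_casimir_commutes_C23_C13 {K A : Type*} [Field K] [Ring A] [Algebra K A]
    (q : K) (hq : q ≠ 0) (hq1 : q + q⁻¹ ≠ 0) (hq2 : q ^ 2 - q⁻¹ ^ 2 ≠ 0)
    (C12 C23 C13 C1 C2 C3 C123 : A)
    (hC1 : ∀ x : A, Commute C1 x) (hC2 : ∀ x : A, Commute C2 x)
    (hC3 : ∀ x : A, Commute C3 x) (hC123 : ∀ x : A, Commute C123 x)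
    (r1 : C12 + (q ^ 2 - q⁻¹ ^ 2)⁻¹ • (q • (C23 * C13) - q⁻¹ • (C13 * C23)) =
      (q + q⁻¹)⁻¹ • (C1 * C2 + C3 * C123))
    (r2 : C23 + (q ^ 2 - q⁻¹ ^ 2)⁻¹ • (q • (C13 * C12) - q⁻¹ • (C12 * C13)) =
      (q + q⁻¹)⁻¹ • (C2 * C3 + C1 * C123))
    (r3 : C13 + (q ^ 2 - q⁻¹ ^ 2)⁻¹ • (q • (C12 * C23) - q⁻¹ • (C23 * C12)) =
      (q + q⁻¹)⁻¹ • (C3 * C1 + C2 * C123)) :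
    Commute
      (q • (C12 * C23 * C13) + (q ^ 2) • C12 ^ 2 + (q⁻¹ ^ 2) • C23 ^ 2
        + (q ^ 2) • C13 ^ 2
        - q • (C12 * (C1 * C2 + C3 * C123))
        - q⁻¹ • (C23 * (C2 * C3 + C1 * C123))
        - q • (C13 * (C3 * C1 + C2 * C123)))
      C23 ∧
    Commute
      (q • (C12 * C23 * C13) + (q ^ 2) • C12 ^ 2 + (q⁻¹ ^ 2) • C23 ^ 2
        + (q ^ 2) • C13 ^ 2
        - q • (C12 * (C1 * C2 + C3 * C123))
        - q⁻¹ • (C23 * (C2 * C3 + C1 * C123))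
        - q • (C13 * (C3 * C1 + C2 * C123)))
      C13 :=
  aw3_casimir_commutes_C23_C13_general q hq2 C12 C23 C13 C1 C2 C3 C123 hC1 hC2 hC3 hC123 r1 r2 r3
end

section
/- Let g = sl₂ over ℂ with basis e, f, h. In U(sl₂)^{⊗3}, define X = k₁ + k₂ + 2T^{(1,2)} and Y = k₂ + k₃ + 2T^{(2,3)}, where k_a = T^{(a,a)} and T^{(a,b)} = Σ_{i,j} e_{ji}^{(a)} e_{ij}^{(b)} is the polarized trace (with e_{11} = H = -e_{22}, e_{12} = E, e_{21} = F in each factor). Then [X, Y] = -8 T^{(1,2,3)}, where T^{(1,2,3)} = Σ e_{i₂i₁}^{(1)} e_{i₃i₂}^{(2)} e_{i₁i₃}^{(3)} (sum over repeated indices in {1,2}). -/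
/-- The defining relations of `U(sl₂)^{⊗3}` in terms of the matrix-unit
generators `e a i j` (the element `e_{ij}` of the `a`-th tensor factor):
tracelessness `e_{11} + e_{22} = 0` in each factor, the `sl₂` commutation
relations `[e_{ij}, e_{kl}] = δ_{jk} e_{il} - δ_{li} e_{kj}` within each
factor, and commutativity between distinct factors. -/
def SL2Cube {A : Type*} [Ring A] (e : Fin 3 → Fin 2 → Fin 2 → A) : Prop :=
  (∀ a, e a 0 0 + e a 1 1 = 0) ∧
  (∀ (a : Fin 3) (i j k l : Fin 2),
      e a i j * e a k l - e a k l * e a i j =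
        (if j = k then e a i l else 0) - (if l = i then e a k j else 0)) ∧
  (∀ (a b : Fin 3), a ≠ b → ∀ i j k l : Fin 2, Commute (e a i j) (e b k l))

/-- The polarized trace `T^{(a,b)} = Σ_{i₁,i₂} e_{i₂i₁}^{(a)} e_{i₁i₂}^{(b)}`. -/
def T2 {A : Type*} [Ring A] (e : Fin 3 → Fin 2 → Fin 2 → A) (a b : Fin 3) : A :=
  ∑ i1 : Fin 2, ∑ i2 : Fin 2, e a i2 i1 * e b i1 i2

/-- The polarized trace `T^{(1,2,3)} = Σ e_{i₂i₁}^{(1)} e_{i₃i₂}^{(2)} e_{i₁i₃}^{(3)}`. -/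
def T3 {A : Type*} [Ring A] (e : Fin 3 → Fin 2 → Fin 2 → A) : A :=
  ∑ i1 : Fin 2, ∑ i2 : Fin 2, ∑ i3 : Fin 2, e 0 i2 i1 * e 1 i3 i2 * e 2 i1 i3

/-- `k_a = T^{(a,a)}`. -/
def kA {A : Type*} [Ring A] (e : Fin 3 → Fin 2 → Fin 2 → A) (a : Fin 3) : A :=
  T2 e a a

/-- `X = k₁ + k₂ + 2 T^{(1,2)}`. -/
def XX {A : Type*} [Ring A] (e : Fin 3 → Fin 2 → Fin 2 → A) : A :=
  kA e 0 + kA e 1 + 2 * T2 e 0 1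

/-- `Y = k₂ + k₃ + 2 T^{(2,3)}`. -/
def YY {A : Type*} [Ring A] (e : Fin 3 → Fin 2 → Fin 2 → A) : A :=
  kA e 1 + kA e 2 + 2 * T2 e 1 2

/-- `Z = [X,Y]`. -/
def ZZ {A : Type*} [Ring A] (e : Fin 3 → Fin 2 → Fin 2 → A) : A :=
  XX e * YY e - YY e * XX e

/-- `k₄ = k₁ + k₂ + k₃ + 2(T^{(1,2)} + T^{(2,3)} + T^{(1,3)})`. -/
def k4 {A : Type*} [Ring A] (e : Fin 3 → Fin 2 → Fin 2 → A) : A :=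
  kA e 0 + kA e 1 + kA e 2 + 2 * (T2 e 0 1 + T2 e 1 2 + T2 e 0 2)


section
variable {A : Type*} [Ring A] {e : Fin 3 → Fin 2 → Fin 2 → A}

lemma tr11 (h : SL2Cube e) (a : Fin 3) : e a 1 1 = -(e a 0 0) :=
  eq_neg_of_add_eq_zero_right (h.1 a)

lemma sw1 (h : SL2Cube e) (a : Fin 3) :
    e a 0 1 * e a 0 0 = e a 0 0 * e a 0 1 - e a 0 1 := by
  have h' := h.2.1 a 0 1 0 0
  norm_num at h'
  rw [sub_eq_iff_eq_add] at h'
  rw [h']; noncomm_ring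

lemma sw2 (h : SL2Cube e) (a : Fin 3) :
    e a 1 0 * e a 0 0 = e a 0 0 * e a 1 0 + e a 1 0 := by
  have h' := h.2.1 a 1 0 0 0
  norm_num at h'
  rw [sub_eq_iff_eq_add] at h'
  rw [h']; abel

lemma sw3 (h : SL2Cube e) (a : Fin 3) :
    e a 1 0 * e a 0 1 = e a 0 1 * e a 1 0 - 2 * e a 0 0 := by
  have h' := h.2.1 a 1 0 0 1
  norm_num [tr11 h] at h'
  rw [sub_eq_iff_eq_add] at h'
  rw [h']; noncomm_ring

lemma sw1' (h : SL2Cube e) (a : Fin 3) (x : A) :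
    e a 0 1 * (e a 0 0 * x) = e a 0 0 * (e a 0 1 * x) - e a 0 1 * x := by
  rw [← mul_assoc, sw1 h, sub_mul, mul_assoc]

lemma sw2' (h : SL2Cube e) (a : Fin 3) (x : A) :
    e a 1 0 * (e a 0 0 * x) = e a 0 0 * (e a 1 0 * x) + e a 1 0 * x := by
  rw [← mul_assoc, sw2 h, add_mul, mul_assoc]

lemma sw3' (h : SL2Cube e) (a : Fin 3) (x : A) :
    e a 1 0 * (e a 0 1 * x) = e a 0 1 * (e a 1 0 * x) - 2 * (e a 0 0 * x) := by
  rw [← mul_assoc, sw3 h, sub_mul, mul_assoc, mul_assoc]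

lemma c10 (h : SL2Cube e) (i j k l : Fin 2) :
    e 1 i j * e 0 k l = e 0 k l * e 1 i j := (h.2.2 0 1 (by decide) k l i j).eq.symm

lemma c20 (h : SL2Cube e) (i j k l : Fin 2) :
    e 2 i j * e 0 k l = e 0 k l * e 2 i j := (h.2.2 0 2 (by decide) k l i j).eq.symm

lemma c21 (h : SL2Cube e) (i j k l : Fin 2) :
    e 2 i j * e 1 k l = e 1 k l * e 2 i j := (h.2.2 1 2 (by decide) k l i j).eq.symm

lemma c10' (h : SL2Cube e) (i j k l : Fin 2) (x : A) :
    e 1 i j * (e 0 k l * x) = e 0 k l * (e 1 i j * x) := by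
  rw [← mul_assoc, c10 h, mul_assoc]

lemma c20' (h : SL2Cube e) (i j k l : Fin 2) (x : A) :
    e 2 i j * (e 0 k l * x) = e 0 k l * (e 2 i j * x) := by
  rw [← mul_assoc, c20 h, mul_assoc]

lemma c21' (h : SL2Cube e) (i j k l : Fin 2) (x : A) :
    e 2 i j * (e 1 k l * x) = e 1 k l * (e 2 i j * x) := by
  rw [← mul_assoc, c21 h, mul_assoc]

lemma mul2 (x y : A) : x * (2 * y) = 2 * (x * y) := by noncomm_ring

end

set_option maxHeartbeats 4000000 in
/-- In `U(sl₂)^{⊗3}`, `[X, Y] = -8 T^{(1,2,3)}`. -/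
theorem bracket_XY_eq_T123 {A : Type*} [Ring A]
    (e : Fin 3 → Fin 2 → Fin 2 → A) (h : SL2Cube e) :
    XX e * YY e - YY e * XX e = -8 * T3 e := by
  simp only [XX, YY, kA, T2, T3, Fin.sum_univ_two, tr11 h]
  simp only [mul_add, add_mul, sub_mul, mul_sub, neg_mul, mul_neg, neg_neg, mul_assoc, mul2,
    sw1' h, sw2' h, sw3' h, sw1 h, sw2 h, sw3 h, c10' h, c20' h, c21' h, c10 h, c20 h, c21 h]
  noncomm_ring
end

section
/- In U(sl₂)^{⊗3} with notation as above, the element k₁ = T^{(1,1)} commutes with X = k₁ + k₂ + 2T^{(1,2)}, with Y = k₂ + k₃ + 2T^{(2,3)}, and with Z = [X,Y]. -/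
private lemma cas_comm_gen {A : Type*} [Ring A]
    (e : Fin 3 → Fin 2 → Fin 2 → A) (h : SL2Cube e) (a : Fin 3) (i j : Fin 2) :
    Commute (kA e 0) (e a i j) := by
  by_cases ha : a = 0
  · subst ha
    show _ = _
    unfold kA T2
    simp only [Fin.sum_univ_two]
    have H : ∀ p q : Fin 2, e 0 p q * e 0 i j - e 0 i j * e 0 p q =
        (if q = i then e 0 p j else 0) - (if j = p then e 0 i q else 0) :=
      fun p q => h.2.1 0 p q i j
    fin_cases i <;> fin_cases j <;>
    linear_combination (norm := (simp only [Fin.isValue, Fin.mk_zero, Fin.mk_one,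
        show (1:Fin 2) ≠ 0 by decide, show (0:Fin 2) ≠ 1 by decide,
        if_true, ite_true, ite_false, if_false, if_neg, if_pos, ne_eq,
        not_false_iff, mul_zero, zero_mul, sub_zero, zero_sub]; noncomm_ring))
      e 0 0 0 * H 0 0 + H 0 0 * e 0 0 0 + e 0 0 1 * H 1 0 + H 0 1 * e 0 1 0 +
      e 0 1 0 * H 0 1 + H 1 0 * e 0 0 1 + e 0 1 1 * H 1 1 + H 1 1 * e 0 1 1
  · unfold kA T2
    refine Commute.sum_left _ _ _ fun p _ => Commute.sum_left _ _ _ fun q _ => ?_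
    exact (h.2.2 0 a (fun hh => ha hh.symm) q p i j).mul_left
      (h.2.2 0 a (fun hh => ha hh.symm) p q i j)

private lemma cas_comm_T2 {A : Type*} [Ring A]
    (e : Fin 3 → Fin 2 → Fin 2 → A) (h : SL2Cube e) (a b : Fin 3) :
    Commute (kA e 0) (T2 e a b) := by
  unfold T2
  refine Commute.sum_right _ _ _ fun p _ => Commute.sum_right _ _ _ fun q _ => ?_
  exact (cas_comm_gen e h a q p).mul_right (cas_comm_gen e h b p q)

private lemma cas_comm_X {A : Type*} [Ring A]
    (e : Fin 3 → Fin 2 → Fin 2 → A) (h : SL2Cube e) :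
    Commute (kA e 0) (XX e) := by
  unfold XX kA
  exact ((cas_comm_T2 e h 0 0).add_right (cas_comm_T2 e h 1 1)).add_right
    ((Commute.ofNat_right _ 2).mul_right (cas_comm_T2 e h 0 1))

private lemma cas_comm_Y {A : Type*} [Ring A]
    (e : Fin 3 → Fin 2 → Fin 2 → A) (h : SL2Cube e) :
    Commute (kA e 0) (YY e) := by
  unfold YY kA
  exact ((cas_comm_T2 e h 1 1).add_right (cas_comm_T2 e h 2 2)).add_right
    ((Commute.ofNat_right _ 2).mul_right (cas_comm_T2 e h 1 2))

/-- In `U(sl₂)^{⊗3}`, the Casimir `k₁ = T^{(1,1)}` commutes with `X`, `Y`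
and `Z = [X,Y]`. -/
theorem k1_commutes {A : Type*} [Ring A]
    (e : Fin 3 → Fin 2 → Fin 2 → A) (h : SL2Cube e) :
    Commute (kA e 0) (XX e) ∧ Commute (kA e 0) (YY e) ∧ Commute (kA e 0) (ZZ e) := by
  refine ⟨cas_comm_X e h, cas_comm_Y e h, ?_⟩
  unfold ZZ
  exact ((cas_comm_X e h).mul_right (cas_comm_Y e h)).sub_right
    ((cas_comm_Y e h).mul_right (cas_comm_X e h))
end
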